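/- arXiv:1605.00024 — 5 statements merged into one kernel-verified Lean document; each statement's English description precedes it below -/
import Mathlib

section
/- For any real number p > 0 there exist positive constants c₁ and c₂ (depending only on p) such that for every x > 0 one has ∑_{n=0}^{∞} xⁿ/(n!)^p ≥ c₁ · exp(c₂ · x^{1/p}). -/
open Real

/-- The series is summable for any `p > 0` and `x > 0`. -/
lemma aux_summable (p : ℝ) (hp : 0 < p) (x : ℝ) (hx : 0 < x) :
    Summable (fun n : ℕ => x ^ n / (n.factorial : ℝ) ^ p) := by
  apply summable_of_ratio_test_tendsto_lt_one (l := 0) one_pos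
  · filter_upwards with n
    have h1 : (0:ℝ) < (n.factorial : ℝ) ^ p :=
      rpow_pos_of_pos (by exact_mod_cast n.factorial_pos) p
    positivity
  · have hx0 : ∀ n : ℕ, x ^ n / (n.factorial : ℝ) ^ p > 0 := fun n => by
      have h1 : (0:ℝ) < (n.factorial : ℝ) ^ p :=
        rpow_pos_of_pos (by exact_mod_cast n.factorial_pos) p
      positivity
    have heq : ∀ n : ℕ, ‖x ^ (n+1) / ((n+1).factorial : ℝ) ^ p‖ / ‖x ^ n / (n.factorial : ℝ) ^ p‖
        = x * ((n:ℝ) + 1) ^ (-p) := by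
      intro n
      have hf : (0:ℝ) < (n.factorial : ℝ) := by exact_mod_cast n.factorial_pos
      have hf1 : (0:ℝ) < ((n+1).factorial : ℝ) := by exact_mod_cast (n+1).factorial_pos
      rw [Real.norm_of_nonneg (hx0 (n+1)).le, Real.norm_of_nonneg (hx0 n).le]
      rw [Nat.factorial_succ]
      push_cast
      rw [Real.mul_rpow (by positivity) hf.le, Real.rpow_neg (by positivity)]
      rw [pow_succ]
      have hfp : (0:ℝ) < (n.factorial : ℝ) ^ p := rpow_pos_of_pos hf p
      have hnp : (0:ℝ) < ((n:ℝ) + 1) ^ p := rpow_pos_of_pos (by positivity) p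
      field_simp
    simp only [heq]
    have : Filter.Tendsto (fun n : ℕ => ((n:ℝ) + 1) ^ (-p)) Filter.atTop (nhds 0) := by
      apply Filter.Tendsto.comp (tendsto_rpow_neg_atTop hp)
      exact Filter.tendsto_atTop_add_const_right _ 1 tendsto_natCast_atTop_atTop
    simpa using (this.const_mul x)

/-- For any `p > 0` there exist `c₁, c₂ > 0` with
`∑_{n} xⁿ/(n!)^p ≥ c₁ exp(c₂ x^{1/p})` for all `x > 0`. -/
theorem tsum_pow_div_factorial_rpow_ge (p : ℝ) (hp : 0 < p) :
    ∃ c₁ c₂ : ℝ, 0 < c₁ ∧ 0 < c₂ ∧ ∀ x : ℝ, 0 < x →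
      c₁ * Real.exp (c₂ * x ^ (1 / p)) ≤ ∑' n : ℕ, x ^ n / (n.factorial : ℝ) ^ p := by
  set E := Real.exp 1 with hE
  have hE2 : 2 < E := by
    have := Real.exp_one_gt_d9
    linarith
  have hlog2 : Real.log 2 < 1 := by
    calc Real.log 2 < Real.log E := Real.log_lt_log two_pos hE2
    _ = 1 := Real.log_exp 1
  set c₂ := p * (1 - Real.log 2) / E with hc₂def
  have hEpos : 0 < E := by linarith
  have hc₂ : 0 < c₂ := by
    apply div_pos _ hEpos
    apply mul_pos hp
    linarith
  refine ⟨Real.exp (-(c₂ * E)), c₂, Real.exp_pos _, hc₂, ?_⟩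
  intro x hx
  set y := x ^ (1 / p) with hy
  have hy0 : 0 < y := Real.rpow_pos_of_pos hx _
  have hxy : x = y ^ p := by
    rw [hy, one_div]
    exact (Real.rpow_inv_rpow hx.le hp.ne').symm
  have hsum := aux_summable p hp x hx
  have hnonneg : ∀ n : ℕ, 0 ≤ x ^ n / (n.factorial : ℝ) ^ p := fun n => by
    have h1 : (0:ℝ) < (n.factorial : ℝ) ^ p :=
      Real.rpow_pos_of_pos (by exact_mod_cast n.factorial_pos) p
    positivity
  rcases le_or_gt y E with hye | hye
  · -- small case : LHS ≤ 1 ≤ sum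
    have h1 : (1:ℝ) ≤ ∑' n : ℕ, x ^ n / (n.factorial : ℝ) ^ p := by
      have := Summable.le_tsum hsum 0 (fun j _ => hnonneg j)
      simpa using this
    calc Real.exp (-(c₂ * E)) * Real.exp (c₂ * y)
        = Real.exp (c₂ * y - c₂ * E) := by rw [← Real.exp_add]; ring_nf
      _ ≤ 1 := by
          apply Real.exp_le_one_iff.mpr
          nlinarith
      _ ≤ _ := h1
  · -- large case : single term bound
    set n := ⌈y / E⌉₊ with hn
    have hn1 : 1 ≤ n := Nat.one_le_ceil_iff.mpr (div_pos hy0 hEpos)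
    have hnpos : (0:ℝ) < (n:ℝ) := by exact_mod_cast hn1
    have hnge : y / E ≤ (n:ℝ) := Nat.le_ceil _
    have hnle : (n:ℝ) < y / E + 1 := Nat.ceil_lt_add_one (div_pos hy0 hEpos).le
    have hyE1 : 1 < y / E := (one_lt_div hEpos).mpr hye
    have hnle2 : (n:ℝ) ≤ 2 * (y / E) := by linarith
    -- y / n ≥ E / 2
    have hdiv : E / 2 ≤ y / (n:ℝ) := by
      rw [div_le_div_iff₀ two_pos hnpos]
      have : E * (n:ℝ) ≤ E * (2 * (y / E)) := by
        apply mul_le_mul_of_nonneg_left hnle2 hEpos.le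
      calc E * (n:ℝ) ≤ E * (2 * (y / E)) := this
        _ = y * 2 := by field_simp
    -- key chain
    have hfact : ((n.factorial : ℝ)) ^ p ≤ (((n:ℝ) ^ n)) ^ p := by
      apply Real.rpow_le_rpow (by positivity) _ hp.le
      exact_mod_cast Nat.factorial_le_pow n
    have hfpos : (0:ℝ) < (n.factorial : ℝ) ^ p :=
      Real.rpow_pos_of_pos (by exact_mod_cast n.factorial_pos) p
    have hxn : x ^ n = ((y ^ n : ℝ)) ^ p := by
      rw [hxy, ← Real.rpow_natCast (y ^ p) n, ← Real.rpow_mul hy0.le,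
        mul_comm, Real.rpow_mul hy0.le, Real.rpow_natCast]
    have step1 : ((y / (n:ℝ)) ^ n) ^ p ≤ x ^ n / (n.factorial : ℝ) ^ p := by
      rw [hxn, div_pow, ← Real.div_rpow (by positivity) (by positivity)]
      apply Real.rpow_le_rpow (by positivity) _ hp.le
      gcongr
      exact_mod_cast Nat.factorial_le_pow n
    have step2 : ((E / 2) ^ n : ℝ) ≤ (y / (n:ℝ)) ^ n :=
      pow_le_pow_left₀ (by positivity) hdiv n
    have step3 : (E / 2) ^ (y / E) ≤ ((E / 2) ^ n : ℝ) := by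
      rw [← Real.rpow_natCast (E / 2) n]
      apply Real.rpow_le_rpow_of_exponent_le (by linarith) hnge
    have step4 : Real.exp (c₂ * y) = ((E / 2) ^ (y / E)) ^ p := by
      rw [← Real.rpow_mul (by positivity : (0:ℝ) ≤ E/2),
        Real.rpow_def_of_pos (by linarith : (0:ℝ) < E/2)]
      congr 1
      rw [Real.log_div (by linarith) two_ne_zero, hE, Real.log_exp, hc₂def]
      field_simp
      ring
    have hbig : Real.exp (c₂ * y) ≤ x ^ n / (n.factorial : ℝ) ^ p := by
      rw [step4]
      calc ((E / 2) ^ (y / E)) ^ p ≤ ((y / (n:ℝ)) ^ n) ^ p := by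
            apply Real.rpow_le_rpow (Real.rpow_pos_of_pos (by linarith) _).le
              (le_trans step3 step2) hp.le
        _ ≤ _ := step1
    have hterm := Summable.le_tsum hsum n (fun j _ => hnonneg j)
    have hc1 : Real.exp (-(c₂ * E)) ≤ 1 := Real.exp_le_one_iff.mpr (by nlinarith)
    calc Real.exp (-(c₂ * E)) * Real.exp (c₂ * y) ≤ 1 * Real.exp (c₂ * y) := by
          apply mul_le_mul_of_nonneg_right hc1 (Real.exp_pos _).le
      _ = Real.exp (c₂ * y) := one_mul _
      _ ≤ x ^ n / (n.factorial : ℝ) ^ p := hbig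
      _ ≤ _ := hterm
end

section
/- For any sequence (aₙ)_{n≥0} of nonnegative extended real numbers and any real number p ≥ 1, one has (∑_{n=0}^{∞} aₙ)^p ≤ 2^{p-1} · ∑_{n=0}^{∞} (2^{p-1})ⁿ · aₙ^p, where all sums and powers are taken in the extended nonnegative reals [0, ∞]. -/
open ENNReal

lemma finset_sum_rpow_le (p : ℝ) (hp : 1 ≤ p) :
    ∀ (N : ℕ) (a : ℕ → ℝ≥0∞),
      (∑ n ∈ Finset.range N, a n) ^ p ≤
        (2 : ℝ≥0∞) ^ (p - 1) * ∑ n ∈ Finset.range N, ((2 : ℝ≥0∞) ^ (p - 1)) ^ n * (a n) ^ p := by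
  intro N
  induction N with
  | zero =>
    intro a
    simp [ENNReal.zero_rpow_of_pos (by linarith : (0:ℝ) < p)]
  | succ N ih =>
    intro a
    rw [Finset.sum_range_succ' a, Finset.sum_range_succ'
      (fun n => ((2 : ℝ≥0∞) ^ (p - 1)) ^ n * (a n) ^ p)]
    calc (∑ n ∈ Finset.range N, a (n + 1) + a 0) ^ p
        ≤ (2 : ℝ≥0∞) ^ (p - 1) *
            ((∑ n ∈ Finset.range N, a (n + 1)) ^ p + (a 0) ^ p) :=
          ENNReal.rpow_add_le_mul_rpow_add_rpow _ _ hp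
      _ ≤ (2 : ℝ≥0∞) ^ (p - 1) *
            ((2 : ℝ≥0∞) ^ (p - 1) *
              ∑ n ∈ Finset.range N, ((2 : ℝ≥0∞) ^ (p - 1)) ^ n * (a (n + 1)) ^ p
              + (a 0) ^ p) := by
          gcongr
          exact ih (fun n => a (n + 1))
      _ = (2 : ℝ≥0∞) ^ (p - 1) *
            (∑ n ∈ Finset.range N, ((2 : ℝ≥0∞) ^ (p - 1)) ^ (n + 1) * (a (n + 1)) ^ p
              + ((2 : ℝ≥0∞) ^ (p - 1)) ^ 0 * (a 0) ^ p) := by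
          rw [Finset.mul_sum]
          congr 1
          congr 1
          · exact Finset.sum_congr rfl fun n _ => by rw [pow_succ, ← mul_assoc,
              mul_comm (((2:ℝ≥0∞) ^ (p-1)) ^ n)]
          · rw [pow_zero, one_mul]

/-- For nonnegative extended reals and `p ≥ 1`:
`(∑ aₙ)^p ≤ 2^{p-1} ∑ (2^{p-1})ⁿ aₙ^p`. -/
theorem tsum_rpow_le (a : ℕ → ℝ≥0∞) (p : ℝ) (hp : 1 ≤ p) :
    (∑' n : ℕ, a n) ^ p ≤
      (2 : ℝ≥0∞) ^ (p - 1) * ∑' n : ℕ, ((2 : ℝ≥0∞) ^ (p - 1)) ^ n * (a n) ^ p := by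
  have h1 : Filter.Tendsto (fun N => (∑ n ∈ Finset.range N, a n) ^ p)
      Filter.atTop (nhds ((∑' n : ℕ, a n) ^ p)) :=
    (ENNReal.continuous_rpow_const.tendsto _).comp (ENNReal.tendsto_nat_tsum a)
  refine le_of_tendsto h1 (Filter.Eventually.of_forall fun N => ?_)
  calc (∑ n ∈ Finset.range N, a n) ^ p
      ≤ (2 : ℝ≥0∞) ^ (p - 1) *
          ∑ n ∈ Finset.range N, ((2 : ℝ≥0∞) ^ (p - 1)) ^ n * (a n) ^ p :=
        finset_sum_rpow_le p hp N a
    _ ≤ _ := by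
        gcongr
        exact ENNReal.sum_le_tsum _
end

section
/- For every real number a > 0 there exists a constant C > 0 (depending only on a) such that Γ(a·n + 1) ≤ C · a^{a·n} · n^{(1−a)/2} · (n!)^a for all integers n ≥ 1. -/
open Real

private lemma gamma_interp (m : ℕ) (x : ℝ) (h1 : (m : ℝ) ≤ x) (h2 : x ≤ (m : ℝ) + 1) :
    Real.Gamma (x + 1) ≤ (m.factorial : ℝ) * ((m : ℝ) + 1) ^ (x - (m : ℝ)) := by
  have hfac : (0 : ℝ) < (m.factorial : ℝ) := by exact_mod_cast m.factorial_pos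
  set δ : ℝ := x - (m : ℝ) with hδdef
  have hδ0 : 0 ≤ δ := by simp [hδdef]; linarith
  have hδ1 : δ ≤ 1 := by simp [hδdef]; linarith
  rcases eq_or_lt_of_le hδ0 with h0 | h0
  · have hx : x = (m : ℝ) := by simp [hδdef] at h0; linarith
    rw [hx, Real.Gamma_nat_eq_factorial, ← h0, Real.rpow_zero, mul_one]
  rcases eq_or_lt_of_le hδ1 with h1' | h1'
  · have hx : x = (m : ℝ) + 1 := by simp [hδdef] at h1'; linarith
    have : ((m : ℝ) + 1) + 1 = ((m + 1 : ℕ) : ℝ) + 1 := by push_cast; ring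
    rw [hx, this, Real.Gamma_nat_eq_factorial, h1', Real.rpow_one]
    rw [Nat.factorial_succ]
    push_cast; ring_nf; rfl
  · have key := Real.Gamma_mul_add_mul_le_rpow_Gamma_mul_rpow_Gamma
      (s := (m : ℝ) + 1) (t := (m : ℝ) + 2) (a := 1 - δ) (b := δ)
      (by positivity) (by positivity) (by linarith) h0 (by ring)
    have harg : (1 - δ) * ((m : ℝ) + 1) + δ * ((m : ℝ) + 2) = x + 1 := by
      simp [hδdef]; ring
    rw [harg] at key
    have hg1 : Real.Gamma ((m : ℝ) + 1) = (m.factorial : ℝ) := Real.Gamma_nat_eq_factorial m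
    have hg2 : Real.Gamma ((m : ℝ) + 2) = ((m + 1).factorial : ℝ) := by
      have : (m : ℝ) + 2 = ((m + 1 : ℕ) : ℝ) + 1 := by push_cast; ring
      rw [this, Real.Gamma_nat_eq_factorial]
    rw [hg1, hg2] at key
    have hf2 : ((m + 1).factorial : ℝ) = ((m : ℝ) + 1) * (m.factorial : ℝ) := by
      rw [Nat.factorial_succ]; push_cast; ring
    calc Real.Gamma (x + 1)
        ≤ (m.factorial : ℝ) ^ (1 - δ) * ((m + 1).factorial : ℝ) ^ δ := key
      _ = (m.factorial : ℝ) ^ (1 - δ) * (((m : ℝ) + 1) ^ δ * (m.factorial : ℝ) ^ δ) := by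
          rw [hf2, Real.mul_rpow (by positivity) hfac.le]
      _ = ((m.factorial : ℝ) ^ (1 - δ) * (m.factorial : ℝ) ^ δ) * ((m : ℝ) + 1) ^ δ := by ring
      _ = (m.factorial : ℝ) * ((m : ℝ) + 1) ^ δ := by
          rw [← Real.rpow_add hfac]; norm_num

private lemma stirling_low (n : ℕ) (hn : 1 ≤ n) :
    Real.sqrt (n : ℝ) * ((n : ℝ) / Real.exp 1) ^ (n : ℕ) ≤ (n.factorial : ℝ) := by
  have hpi : Real.sqrt π ≤ Stirling.stirlingSeq n := by
    have htend : Filter.Tendsto (Stirling.stirlingSeq ∘ Nat.succ) Filter.atTop (nhds (Real.sqrt π)) :=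
      Stirling.tendsto_stirlingSeq_sqrt_pi.comp (Filter.tendsto_add_atTop_nat 1)
    have := Stirling.stirlingSeq'_antitone.le_of_tendsto htend (n - 1)
    simpa [Nat.succ_eq_add_one, Nat.sub_add_cancel hn] using this
  have hn0 : (0 : ℝ) < (n : ℝ) := by exact_mod_cast hn
  have hD : (0 : ℝ) < Real.sqrt (2 * n) * ((n : ℝ) / Real.exp 1) ^ (n : ℕ) := by positivity
  have hfac : Real.sqrt π * (Real.sqrt (2 * n) * ((n : ℝ) / Real.exp 1) ^ (n : ℕ))
      ≤ (n.factorial : ℝ) := by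
    rw [← le_div_iff₀ hD]
    exact hpi
  refine le_trans ?_ hfac
  have h1 : Real.sqrt (n : ℝ) ≤ Real.sqrt π * Real.sqrt (2 * n) := by
    rw [← Real.sqrt_mul (by positivity)]
    apply Real.sqrt_le_sqrt
    nlinarith [Real.pi_gt_three, hn0]
  calc Real.sqrt (n : ℝ) * ((n : ℝ) / Real.exp 1) ^ (n : ℕ)
      ≤ (Real.sqrt π * Real.sqrt (2 * n)) * ((n : ℝ) / Real.exp 1) ^ (n : ℕ) := by
        apply mul_le_mul_of_nonneg_right h1 (by positivity)
    _ = Real.sqrt π * (Real.sqrt (2 * n) * ((n : ℝ) / Real.exp 1) ^ (n : ℕ)) := by ring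

private lemma stirling_up (m : ℕ) (hm : 1 ≤ m) :
    (m.factorial : ℝ) ≤ Real.exp 1 * Real.sqrt (m : ℝ) * ((m : ℝ) / Real.exp 1) ^ (m : ℕ) := by
  have hup : Stirling.stirlingSeq m ≤ Real.exp 1 / Real.sqrt 2 := by
    have h := Stirling.stirlingSeq'_antitone (Nat.zero_le (m - 1))
    simp only [Function.comp_apply, Nat.succ_eq_add_one, Nat.zero_add,
      Nat.sub_add_cancel hm] at h
    rwa [Stirling.stirlingSeq_one] at h
  have hm0 : (0 : ℝ) < (m : ℝ) := by exact_mod_cast hm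
  have hD : (0 : ℝ) < Real.sqrt (2 * m) * ((m : ℝ) / Real.exp 1) ^ (m : ℕ) := by positivity
  have h2 : (m.factorial : ℝ) ≤
      (Real.exp 1 / Real.sqrt 2) * (Real.sqrt (2 * m) * ((m : ℝ) / Real.exp 1) ^ (m : ℕ)) := by
    rw [← div_le_iff₀ hD]
    exact hup
  refine h2.trans_eq ?_
  have : Real.sqrt (2 * m) = Real.sqrt 2 * Real.sqrt m := Real.sqrt_mul (by norm_num) _
  rw [this]
  have h2ne : Real.sqrt 2 ≠ 0 := by positivity
  field_simp

private lemma claimA (m : ℕ) (hm : 1 ≤ m) (δ : ℝ) (hδ0 : 0 ≤ δ) (hδ1 : δ ≤ 1) :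
    ((m : ℝ) / Real.exp 1) ^ (m : ℕ) * ((m : ℝ) + 1) ^ δ
      ≤ 2 * Real.exp 1 * ((((m : ℝ) + δ)) / Real.exp 1) ^ ((m : ℝ) + δ) := by
  have hm1 : (1 : ℝ) ≤ (m : ℝ) := by exact_mod_cast hm
  have hm0 : (0 : ℝ) < (m : ℝ) := by linarith
  have hx0 : (0 : ℝ) < (m : ℝ) + δ := by linarith
  have e1 : ((m : ℝ) / Real.exp 1) ^ (m : ℕ) = Real.exp ((m : ℝ) * (Real.log m - 1)) := by
    rw [← Real.rpow_natCast ((m : ℝ) / Real.exp 1), Real.rpow_def_of_pos (by positivity),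
      Real.log_div hm0.ne' (Real.exp_ne_zero 1), Real.log_exp]
    ring_nf
  have e2 : ((m : ℝ) + 1) ^ δ = Real.exp (δ * Real.log ((m : ℝ) + 1)) := by
    rw [Real.rpow_def_of_pos (by positivity)]; ring_nf
  have e3 : (((m : ℝ) + δ) / Real.exp 1) ^ ((m : ℝ) + δ)
      = Real.exp (((m : ℝ) + δ) * (Real.log ((m : ℝ) + δ) - 1)) := by
    rw [Real.rpow_def_of_pos (by positivity),
      Real.log_div hx0.ne' (Real.exp_ne_zero 1), Real.log_exp]
    ring_nf
  have e4 : 2 * Real.exp 1 = Real.exp (Real.log 2 + 1) := by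
    rw [Real.exp_add, Real.exp_log (by norm_num)]
  rw [e1, e2, e3, e4, ← Real.exp_add, ← Real.exp_add, Real.exp_le_exp]
  -- linear inequality on logs
  have f1 : Real.log ((m : ℝ) + 1) ≤ Real.log (m : ℝ) + Real.log 2 := by
    rw [← Real.log_mul hm0.ne' (by norm_num)]
    apply Real.log_le_log (by positivity)
    linarith
  have f2 : ((m : ℝ) + δ) * Real.log (m : ℝ) ≤ ((m : ℝ) + δ) * Real.log ((m : ℝ) + δ) :=
    mul_le_mul_of_nonneg_left (Real.log_le_log hm0 (by linarith)) hx0.le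
  have f3 : 0 ≤ Real.log (m : ℝ) := Real.log_nonneg hm1
  have f4 : 0 ≤ Real.log 2 := Real.log_nonneg (by norm_num)
  have f5 : δ * Real.log ((m : ℝ) + 1) ≤ δ * Real.log (m : ℝ) + δ * Real.log 2 := by
    nlinarith [mul_le_mul_of_nonneg_left f1 hδ0]
  have f6 : δ * Real.log 2 ≤ Real.log 2 := mul_le_of_le_one_left f4 hδ1
  nlinarith [f2, f5, f6]

/-- For `a > 0` there is `C > 0` with
`Γ(a n + 1) ≤ C a^{a n} n^{(1−a)/2} (n!)^a` for all `n ≥ 1`. -/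
theorem gamma_le_factorial_rpow (a : ℝ) (ha : 0 < a) :
    ∃ C : ℝ, 0 < C ∧ ∀ n : ℕ, 1 ≤ n →
      Real.Gamma (a * n + 1)
        ≤ C * a ^ (a * n) * (n : ℝ) ^ ((1 - a) / 2) * (n.factorial : ℝ) ^ a := by
  have hsa : 0 < Real.sqrt a := Real.sqrt_pos.mpr ha
  refine ⟨2 * Real.exp 1 ^ 2 * Real.sqrt a + 1 / a, by positivity, ?_⟩
  intro n hn
  have hn1 : (1 : ℝ) ≤ (n : ℝ) := by exact_mod_cast hn
  have hn0 : (0 : ℝ) < (n : ℝ) := by linarith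
  have hX : 0 < a * (n : ℝ) := by positivity
  set X := a * (n : ℝ) with hXdef
  set m := ⌊X⌋₊ with hmdef
  have hmX : (m : ℝ) ≤ X := Nat.floor_le hX.le
  have hXm : X < (m : ℝ) + 1 := Nat.lt_floor_add_one X
  have hGam := gamma_interp m X hmX hXm.le
  have hfacn : (0 : ℝ) < (n.factorial : ℝ) := by exact_mod_cast n.factorial_pos
  by_cases hm : m = 0
  · -- small case : X < 1 hence a < 1
    rw [hm] at hGam
    simp only [Nat.cast_zero, Nat.factorial_zero, Nat.cast_one, zero_add, sub_zero,
      one_mul, Real.one_rpow] at hGam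
    have hX1 : X < 1 := by
      have := hXm; rw [hm] at this; simpa using this
    have haX : a ≤ X := by
      rw [hXdef]; nlinarith
    have ha1 : a < 1 := lt_of_le_of_lt haX hX1
    have h2 : a ≤ a ^ X := by
      calc a = a ^ (1 : ℝ) := (Real.rpow_one a).symm
        _ ≤ a ^ X := Real.rpow_le_rpow_of_exponent_ge ha ha1.le hX1.le
    have h3 : (1 : ℝ) ≤ (n : ℝ) ^ ((1 - a) / 2) :=
      Real.one_le_rpow hn1 (by linarith)
    have h4 : (1 : ℝ) ≤ (n.factorial : ℝ) ^ a := by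
      apply Real.one_le_rpow _ ha.le
      exact_mod_cast n.factorial_pos
    have hC : 1 / a ≤ 2 * Real.exp 1 ^ 2 * Real.sqrt a + 1 / a :=
      le_add_of_nonneg_left (by positivity)
    calc Real.Gamma (X + 1) ≤ 1 := hGam
      _ = (1 / a) * a * 1 * 1 := by field_simp
      _ ≤ (2 * Real.exp 1 ^ 2 * Real.sqrt a + 1 / a) * a ^ X * (n : ℝ) ^ ((1 - a) / 2)
            * (n.factorial : ℝ) ^ a := by
          gcongr
  · have hm1 : 1 ≤ m := Nat.one_le_iff_ne_zero.mpr hm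
    have hm1' : (1 : ℝ) ≤ (m : ℝ) := by exact_mod_cast hm1
    have hub := stirling_up m hm1
    have hAδ := claimA m hm1 (X - (m : ℝ)) (by linarith) (by linarith)
    have hXeq : (m : ℝ) + (X - (m : ℝ)) = X := by ring
    rw [hXeq] at hAδ
    have hlow := stirling_low n hn
    -- upper chain for Gamma
    have hstep : Real.Gamma (X + 1)
        ≤ (2 * Real.exp 1 ^ 2 * Real.sqrt a) * (Real.sqrt (n : ℝ) * (X / Real.exp 1) ^ X) := by
      have hδpow : (0 : ℝ) ≤ ((m : ℝ) + 1) ^ (X - (m : ℝ)) := by positivity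
      calc Real.Gamma (X + 1)
          ≤ (m.factorial : ℝ) * ((m : ℝ) + 1) ^ (X - (m : ℝ)) := hGam
        _ ≤ (Real.exp 1 * Real.sqrt (m : ℝ) * ((m : ℝ) / Real.exp 1) ^ (m : ℕ))
              * ((m : ℝ) + 1) ^ (X - (m : ℝ)) := by
            apply mul_le_mul_of_nonneg_right hub hδpow
        _ = (Real.exp 1 * Real.sqrt (m : ℝ))
              * (((m : ℝ) / Real.exp 1) ^ (m : ℕ) * ((m : ℝ) + 1) ^ (X - (m : ℝ))) := by ring
        _ ≤ (Real.exp 1 * Real.sqrt (m : ℝ)) * (2 * Real.exp 1 * (X / Real.exp 1) ^ X) := by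
            apply mul_le_mul_of_nonneg_left hAδ (by positivity)
        _ = (2 * Real.exp 1 ^ 2) * (Real.sqrt (m : ℝ) * (X / Real.exp 1) ^ X) := by ring
        _ ≤ (2 * Real.exp 1 ^ 2) * ((Real.sqrt a * Real.sqrt (n : ℝ)) * (X / Real.exp 1) ^ X) := by
            apply mul_le_mul_of_nonneg_left _ (by positivity)
            apply mul_le_mul_of_nonneg_right _ (by positivity)
            rw [← Real.sqrt_mul ha.le]
            exact Real.sqrt_le_sqrt hmX
        _ = (2 * Real.exp 1 ^ 2 * Real.sqrt a) * (Real.sqrt (n : ℝ) * (X / Real.exp 1) ^ X) := by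
            ring
    -- identity rewriting the RHS core
    have hid : Real.sqrt (n : ℝ) * (X / Real.exp 1) ^ X
        = a ^ X * (n : ℝ) ^ ((1 - a) / 2)
          * (Real.sqrt (n : ℝ) * ((n : ℝ) / Real.exp 1) ^ (n : ℕ)) ^ a := by
      have p1 : a ^ X = Real.exp (X * Real.log a) := by
        rw [Real.rpow_def_of_pos ha]; ring_nf
      have p2 : (n : ℝ) ^ ((1 - a) / 2) = Real.exp ((1 - a) / 2 * Real.log n) := by
        rw [Real.rpow_def_of_pos hn0]; ring_nf
      have p3 : Real.sqrt (n : ℝ) = Real.exp (Real.log n / 2) := by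
        rw [Real.sqrt_eq_rpow, Real.rpow_def_of_pos hn0]; ring_nf
      have p4 : ((n : ℝ) / Real.exp 1) ^ (n : ℕ) = Real.exp ((n : ℝ) * (Real.log n - 1)) := by
        rw [← Real.rpow_natCast ((n : ℝ) / Real.exp 1), Real.rpow_def_of_pos (by positivity),
          Real.log_div hn0.ne' (Real.exp_ne_zero 1), Real.log_exp]
        ring_nf
      have p5 : (X / Real.exp 1) ^ X = Real.exp (X * (Real.log X - 1)) := by
        rw [Real.rpow_def_of_pos (by positivity),
          Real.log_div hX.ne' (Real.exp_ne_zero 1), Real.log_exp]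
        ring_nf
      have p6 : Real.log X = Real.log a + Real.log n := Real.log_mul ha.ne' hn0.ne'
      have p7 : (Real.exp (Real.log n / 2) * Real.exp ((n : ℝ) * (Real.log n - 1))) ^ a
          = Real.exp (a * (Real.log n / 2 + (n : ℝ) * (Real.log n - 1))) := by
        rw [← Real.exp_add, ← Real.exp_mul, mul_comm]
      rw [p1, p2, p3, p4, p5, p7, ← Real.exp_add, ← Real.exp_add, ← Real.exp_add]
      congr 1
      rw [p6, hXdef]
      ring
    have hmono : (Real.sqrt (n : ℝ) * ((n : ℝ) / Real.exp 1) ^ (n : ℕ)) ^ a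
        ≤ (n.factorial : ℝ) ^ a :=
      Real.rpow_le_rpow (by positivity) hlow ha.le
    calc Real.Gamma (X + 1)
        ≤ (2 * Real.exp 1 ^ 2 * Real.sqrt a) * (Real.sqrt (n : ℝ) * (X / Real.exp 1) ^ X) := hstep
      _ = (2 * Real.exp 1 ^ 2 * Real.sqrt a) * a ^ X * (n : ℝ) ^ ((1 - a) / 2)
            * (Real.sqrt (n : ℝ) * ((n : ℝ) / Real.exp 1) ^ (n : ℕ)) ^ a := by
          rw [hid]; ring
      _ ≤ (2 * Real.exp 1 ^ 2 * Real.sqrt a) * a ^ X * (n : ℝ) ^ ((1 - a) / 2)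
            * (n.factorial : ℝ) ^ a :=
          mul_le_mul_of_nonneg_left hmono (by positivity)
      _ ≤ (2 * Real.exp 1 ^ 2 * Real.sqrt a + 1 / a) * a ^ X * (n : ℝ) ^ ((1 - a) / 2)
            * (n.factorial : ℝ) ^ a := by
          have hCC : (2 * Real.exp 1 ^ 2 * Real.sqrt a)
              ≤ 2 * Real.exp 1 ^ 2 * Real.sqrt a + 1 / a :=
            le_add_of_nonneg_right (by positivity)
          exact mul_le_mul_of_nonneg_right (mul_le_mul_of_nonneg_right
            (mul_le_mul_of_nonneg_right hCC (by positivity)) (by positivity)) (by positivity)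
end

section
/- For any real number a > 0 there exist positive constants C₁ and C₂ (depending only on a) such that for every x > 0 one has ∑_{n=0}^{∞} xⁿ/(n!)^a ≤ C₁ · exp(C₂ · x^{1/a}). -/
open Real

lemma exp_tsum' (y : ℝ) : Real.exp y = ∑' n : ℕ, y ^ n / n.factorial := by
  rw [Real.exp_eq_exp_ℝ, NormedSpace.exp_eq_tsum_div]

lemma key_eq (a : ℝ) (ha : 0 < a) (x : ℝ) (hx : 0 < x) (n : ℕ) :
    x ^ n / (n.factorial : ℝ) ^ a = ((x ^ (1/a)) ^ n / n.factorial) ^ a := by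
  have hy : (0:ℝ) < x ^ (1/a) := Real.rpow_pos_of_pos hx _
  have h1 : (((x ^ (1/a)) ^ n : ℝ)) ^ a = x ^ n := by
    rw [← Real.rpow_natCast (x ^ (1/a)) n, ← Real.rpow_mul hx.le, ← Real.rpow_mul hx.le,
      ← Real.rpow_natCast x n]
    congr 1
    field_simp
  rw [Real.div_rpow (by positivity) (by positivity), h1]

lemma case1_pt (a : ℝ) (h1 : 1 ≤ a) (y : ℝ) (hy : 0 < y) (n : ℕ) :
    ((y ^ n / n.factorial : ℝ)) ^ a ≤ Real.exp ((a-1)*y) * (y ^ n / n.factorial) := by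
  have ht : 0 < (y ^ n / n.factorial : ℝ) := by positivity
  have hle : (y ^ n / n.factorial : ℝ) ≤ Real.exp y := by
    rw [exp_tsum']
    exact Summable.le_tsum (Real.summable_pow_div_factorial y) n (fun m _ => by positivity)
  have e1 : ((y ^ n / n.factorial : ℝ)) ^ a
      = (y ^ n / n.factorial : ℝ) ^ (a-1) * (y ^ n / n.factorial) := by
    nth_rewrite 3 [← Real.rpow_one (y ^ n / (n.factorial:ℝ))]
    rw [← Real.rpow_add ht]
    norm_num
  calc ((y ^ n / n.factorial : ℝ)) ^ a
      = (y ^ n / n.factorial : ℝ) ^ (a-1) * (y ^ n / n.factorial) := e1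
    _ ≤ (Real.exp y) ^ (a-1) * (y ^ n / n.factorial) :=
        mul_le_mul_of_nonneg_right (Real.rpow_le_rpow ht.le hle (by linarith)) ht.le
    _ = Real.exp ((a-1)*y) * (y ^ n / n.factorial) := by
        rw [mul_comm (a-1) y, Real.exp_mul]

lemma case2_pt (a : ℝ) (ha : 0 < a) (h1 : a < 1) (y : ℝ) (hy : 0 < y) (n : ℕ) :
    ((y ^ n / n.factorial : ℝ)) ^ a
      ≤ a * ((2*y) ^ n / n.factorial) + (1-a) * ((2:ℝ) ^ (-(a/(1-a)))) ^ n := by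
  have h2 : (0:ℝ) ≤ 2 := by norm_num
  have hprod : ((2*y) ^ n / (n.factorial:ℝ)) ^ a * (((2:ℝ) ^ (-(a/(1-a)))) ^ n) ^ (1-a)
      = ((y ^ n / n.factorial : ℝ)) ^ a := by
    rw [mul_pow, mul_div_assoc, Real.mul_rpow (by positivity) (by positivity),
      ← Real.rpow_natCast ((2:ℝ) ^ (-(a/(1-a)))) n, ← Real.rpow_mul h2,
      ← Real.rpow_natCast (2:ℝ) n, ← Real.rpow_mul h2, ← Real.rpow_mul h2,
      mul_assoc, mul_comm (((y:ℝ) ^ n / n.factorial) ^ a), ← mul_assoc,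
      ← Real.rpow_add two_pos]
    have hne : (1:ℝ) - a ≠ 0 := by linarith
    have : (n:ℝ) * a + -(a/(1-a)) * n * (1-a) = 0 := by
      field_simp
      ring
    rw [this, Real.rpow_zero, one_mul]
  calc ((y ^ n / n.factorial : ℝ)) ^ a
      = ((2*y) ^ n / (n.factorial:ℝ)) ^ a * (((2:ℝ) ^ (-(a/(1-a)))) ^ n) ^ (1-a) := hprod.symm
    _ ≤ a * ((2*y) ^ n / n.factorial) + (1-a) * ((2:ℝ) ^ (-(a/(1-a)))) ^ n :=
        Real.geom_mean_le_arith_mean2_weighted ha.le (by linarith) (by positivity) (by positivity)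
          (by ring)

/-- For any `a > 0` there exist `C₁, C₂ > 0` with
`∑_{n} xⁿ/(n!)^a ≤ C₁ exp(C₂ x^{1/a})` for all `x > 0`. -/
theorem tsum_pow_div_factorial_rpow_le (a : ℝ) (ha : 0 < a) :
    ∃ C₁ C₂ : ℝ, 0 < C₁ ∧ 0 < C₂ ∧ ∀ x : ℝ, 0 < x →
      (∑' n : ℕ, x ^ n / (n.factorial : ℝ) ^ a) ≤ C₁ * Real.exp (C₂ * x ^ (1 / a)) := by
  rcases le_or_gt 1 a with h1 | h1
  · refine ⟨1, a, one_pos, ha, fun x hx => ?_⟩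
    set y := x ^ (1/a) with hydef
    have hy : 0 < y := Real.rpow_pos_of_pos hx _
    have hsum2 : Summable (fun n : ℕ => Real.exp ((a-1)*y) * (y ^ n / n.factorial)) :=
      (Real.summable_pow_div_factorial y).mul_left _
    have hle : ∀ n : ℕ, x ^ n / (n.factorial : ℝ) ^ a
        ≤ Real.exp ((a-1)*y) * (y ^ n / n.factorial) := by
      intro n
      rw [key_eq a ha x hx n]
      exact case1_pt a h1 y hy n
    have hsum1 : Summable (fun n : ℕ => x ^ n / (n.factorial : ℝ) ^ a) :=
      Summable.of_nonneg_of_le (fun n => by positivity) hle hsum2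
    calc (∑' n : ℕ, x ^ n / (n.factorial : ℝ) ^ a)
        ≤ ∑' n : ℕ, Real.exp ((a-1)*y) * (y ^ n / n.factorial) := Summable.tsum_le_tsum hle hsum1 hsum2
      _ = Real.exp ((a-1)*y) * Real.exp y := by rw [tsum_mul_left, ← exp_tsum']
      _ = 1 * Real.exp (a * y) := by rw [← Real.exp_add, one_mul]; ring_nf
  · set r : ℝ := (2:ℝ) ^ (-(a/(1-a))) with hr
    have hr0 : 0 < r := Real.rpow_pos_of_pos two_pos _
    have hc : 0 < a/(1-a) := div_pos ha (by linarith)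
    have hr1 : r < 1 := Real.rpow_lt_one_of_one_lt_of_neg one_lt_two (by linarith)
    have hK : 0 ≤ (1-a) * (1-r)⁻¹ :=
      mul_nonneg (by linarith) (inv_nonneg.mpr (by linarith))
    refine ⟨a + (1-a) * (1-r)⁻¹, 2,
      add_pos ha (mul_pos (by linarith) (inv_pos.mpr (by linarith))), two_pos, fun x hx => ?_⟩
    set y := x ^ (1/a) with hydef
    have hy : 0 < y := Real.rpow_pos_of_pos hx _
    have hsA : Summable (fun n : ℕ => a * ((2*y) ^ n / n.factorial)) :=
      (Real.summable_pow_div_factorial _).mul_left _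
    have hsB : Summable (fun n : ℕ => (1-a) * r ^ n) :=
      (summable_geometric_of_lt_one hr0.le hr1).mul_left _
    have hle : ∀ n : ℕ, x ^ n / (n.factorial : ℝ) ^ a
        ≤ a * ((2*y) ^ n / n.factorial) + (1-a) * r ^ n := by
      intro n
      rw [key_eq a ha x hx n]
      exact case2_pt a ha h1 y hy n
    have hsum1 : Summable (fun n : ℕ => x ^ n / (n.factorial : ℝ) ^ a) :=
      Summable.of_nonneg_of_le (fun n => by positivity) hle (hsA.add hsB)
    have hE : 1 ≤ Real.exp (2*y) := Real.one_le_exp (by positivity)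
    calc (∑' n : ℕ, x ^ n / (n.factorial : ℝ) ^ a)
        ≤ ∑' n : ℕ, (a * ((2*y) ^ n / n.factorial) + (1-a) * r ^ n) :=
          Summable.tsum_le_tsum hle hsum1 (hsA.add hsB)
      _ = a * Real.exp (2*y) + (1-a) * (1-r)⁻¹ := by
          rw [Summable.tsum_add hsA hsB, tsum_mul_left, tsum_mul_left, ← exp_tsum',
            tsum_geometric_of_lt_one hr0.le hr1]
      _ ≤ (a + (1-a) * (1-r)⁻¹) * Real.exp (2*y) := by nlinarith [hK, hE]
end

section
/- Let a ≥ 1 and c > 0 be real numbers. There exist positive constants c₁ and c₂ (depending only on a and c) such that for every t > 0 one has ∑_{n=0}^{∞} cⁿ · t^{a·n} / (n!)^a ≥ c₁ · exp(c₂ · c^{1/a} · t). -/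
open Real

/-- `2 ^ (x/2 - 1) ≤ x ^ ⌊x/2⌋ / ⌊x/2⌋!` for `x > 0`. -/
lemma floor_term_lower_bound (x : ℝ) (hx : 0 < x) :
    (2 : ℝ) ^ (x / 2 - 1) ≤ x ^ ⌊x / 2⌋₊ / (Nat.factorial ⌊x / 2⌋₊ : ℝ) := by
  set n : ℕ := ⌊x / 2⌋₊ with hn
  have hfac : (0 : ℝ) < (Nat.factorial n : ℝ) := by positivity
  have h1 : (2 : ℝ) ^ (x / 2 - 1) ≤ (2 : ℝ) ^ (n : ℝ) := by
    apply Real.rpow_le_rpow_of_exponent_le one_le_two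
    have := Nat.lt_floor_add_one (x / 2)
    linarith
  have h2 : (2 : ℝ) ^ (n : ℝ) = (2 : ℝ) ^ n := Real.rpow_natCast 2 n
  have hnle : (n : ℝ) ≤ x / 2 := Nat.floor_le (by positivity)
  -- `n! ≤ (x/2)^n`
  have hfacle : (Nat.factorial n : ℝ) ≤ (x / 2) ^ n := by
    calc (Nat.factorial n : ℝ) ≤ (n : ℝ) ^ n := by
          exact_mod_cast Nat.factorial_le_pow n
      _ ≤ (x / 2) ^ n := pow_le_pow_left₀ (by positivity) hnle n
  have key : (2 : ℝ) ^ n ≤ x ^ n / (Nat.factorial n : ℝ) := by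
    rw [le_div_iff₀ hfac]
    calc (2 : ℝ) ^ n * (Nat.factorial n : ℝ) ≤ 2 ^ n * (x / 2) ^ n := by
          exact mul_le_mul_of_nonneg_left hfacle (by positivity)
      _ = x ^ n := by rw [← mul_pow]; ring_nf
  calc (2 : ℝ) ^ (x / 2 - 1) ≤ (2 : ℝ) ^ (n : ℝ) := h1
    _ = (2 : ℝ) ^ n := h2
    _ ≤ _ := key

/-- Summability of `((x^n/n!))^a` for `x > 0`, `1 ≤ a`. -/
lemma summable_rpow_pow_div_factorial (x a : ℝ) (hx : 0 < x) (ha : 1 ≤ a) :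
    Summable (fun n : ℕ => (x ^ n / (Nat.factorial n : ℝ)) ^ a) := by
  apply summable_of_isBigO_nat (Real.summable_pow_div_factorial x)
  rw [Asymptotics.isBigO_iff]
  refine ⟨1, ?_⟩
  have htend := FloorSemiring.tendsto_pow_div_factorial_atTop x
  filter_upwards [htend.eventually_lt_const one_pos] with n hle
  · have hpos : (0 : ℝ) < x ^ n / (Nat.factorial n : ℝ) := by positivity
    have : (x ^ n / (Nat.factorial n : ℝ)) ^ a ≤ (x ^ n / (Nat.factorial n : ℝ)) ^ (1 : ℝ) :=
      Real.rpow_le_rpow_of_exponent_ge hpos hle.le ha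
    rw [Real.rpow_one] at this
    rw [Real.norm_eq_abs, Real.norm_eq_abs, abs_of_pos hpos,
      abs_of_pos (Real.rpow_pos_of_pos hpos a), one_mul]
    exact this

/-- For `a ≥ 1` and `c > 0` there are `c₁, c₂ > 0` with
`∑_{n} cⁿ t^{a n}/(n!)^a ≥ c₁ exp(c₂ c^{1/a} t)` for all `t > 0`. -/
theorem tsum_exp_lower_bound (a c : ℝ) (ha : 1 ≤ a) (hc : 0 < c) :
    ∃ c₁ c₂ : ℝ, 0 < c₁ ∧ 0 < c₂ ∧ ∀ t : ℝ, 0 < t →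
      c₁ * Real.exp (c₂ * c ^ (1 / a) * t)
        ≤ ∑' n : ℕ, c ^ n * t ^ (a * n) / (n.factorial : ℝ) ^ a := by
  have ha0 : 0 < a := lt_of_lt_of_le one_pos ha
  refine ⟨(2 : ℝ) ^ (-a), Real.log 2 / 2, Real.rpow_pos_of_pos two_pos _,
    by positivity, fun t ht => ?_⟩
  set x : ℝ := c ^ (1 / a) * t with hxdef
  have hx : 0 < x := mul_pos (Real.rpow_pos_of_pos hc _) ht
  -- rewrite each term
  have hterm : ∀ n : ℕ, c ^ n * t ^ (a * n) / (n.factorial : ℝ) ^ a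
      = (x ^ n / (Nat.factorial n : ℝ)) ^ a := by
    intro n
    have hfac : (0 : ℝ) < (Nat.factorial n : ℝ) := by positivity
    rw [Real.div_rpow (by positivity) hfac.le, hxdef, mul_pow]
    congr 1
    rw [Real.mul_rpow (by positivity) (by positivity)]
    congr 1
    · rw [← Real.rpow_natCast (c ^ (1/a)) n, ← Real.rpow_mul hc.le, ← Real.rpow_mul hc.le,
        ← Real.rpow_natCast c n]
      congr 1
      field_simp
    · rw [← Real.rpow_natCast t n, ← Real.rpow_mul ht.le]
      congr 1
      ring
  rw [tsum_congr hterm]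
  have hsum := summable_rpow_pow_div_factorial x a hx ha
  set n : ℕ := ⌊x / 2⌋₊ with hn
  have hle : (x ^ n / (Nat.factorial n : ℝ)) ^ a ≤
      ∑' m : ℕ, (x ^ m / (Nat.factorial m : ℝ)) ^ a :=
    Summable.le_tsum hsum n (fun m _ => by positivity)
  refine le_trans ?_ hle
  -- `2^(-a) * exp(log 2 / 2 * x) = 2^(x/2 - a)`
  have h1 : (2 : ℝ) ^ (-a) * Real.exp (Real.log 2 / 2 * x) = (2 : ℝ) ^ (x / 2 - a) := by
    rw [show x / 2 - a = -a + x / 2 by ring, Real.rpow_add two_pos]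
    congr 1
    rw [Real.rpow_def_of_pos two_pos]
    ring_nf
  rw [hxdef] at h1
  rw [show Real.log 2 / 2 * (c ^ (1/a)) * t = Real.log 2 / 2 * (c ^ (1/a) * t) by ring, h1]
  have h2 : (2 : ℝ) ^ (x / 2 - a) ≤ (2 : ℝ) ^ ((x / 2 - 1) * a) := by
    apply Real.rpow_le_rpow_of_exponent_le one_le_two
    nlinarith
  have h3 : (2 : ℝ) ^ ((x / 2 - 1) * a) = ((2 : ℝ) ^ (x / 2 - 1)) ^ a :=
    Real.rpow_mul (by norm_num) _ _
  calc (2 : ℝ) ^ (x / 2 - a) ≤ (2 : ℝ) ^ ((x / 2 - 1) * a) := h2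
    _ = ((2 : ℝ) ^ (x / 2 - 1)) ^ a := h3
    _ ≤ (x ^ n / (Nat.factorial n : ℝ)) ^ a :=
        Real.rpow_le_rpow (Real.rpow_nonneg (by norm_num) _)
          (floor_term_lower_bound x hx) ha0.le
end
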